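/- For positive integers n₂ ≤ ℓ < n, the block matrix identity ω_{n₁,n₂} β_{ℓ,n} ω_{n₂,ℓ−n₂} = M holds, where M is the 2n×2n block matrix with block rows (reading block column labels of sizes (n−ℓ, ℓ−n₂, n₂, n₂, ℓ−n₂, n−ℓ)): row 1 = (0, I_{ℓ−n₂}, 0, 0, 0, 0), row 2 = (0,0,0,0,0,I_{n−ℓ}), row 3 = (0,0,I_{n₂},0,0,0), row 4 = (0,0,0,I_{n₂},0,0), row 5 = (−I_{n−ℓ},0,0,0,0,0), row 6 = (0,0,0,0,I_{ℓ−n₂},0), with n₁ = n − n₂. -/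
import Mathlib


open Matrix

/-- The block permutation matrix `ω_{a,b} = [[0,I_a,0,0],[I_b,0,0,0],[0,0,0,I_b],[0,0,I_a,0]]`
of size `2(a+b)`. -/
def omegaMat (a b : ℕ) (R : Type*) [CommRing R] :
    Matrix (Fin (2*(a+b))) (Fin (2*(a+b))) R :=
  Matrix.of fun i j =>
    if ((i : ℕ) < a ∧ (j : ℕ) = (i : ℕ) + b) ∨
       (a ≤ (i : ℕ) ∧ (i : ℕ) < a + b ∧ (j : ℕ) + a = (i : ℕ)) ∨
       (a + b ≤ (i : ℕ) ∧ (i : ℕ) < a + 2*b ∧ (j : ℕ) = (i : ℕ) + a) ∨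
       (a + 2*b ≤ (i : ℕ) ∧ (j : ℕ) + b = (i : ℕ))
    then 1 else 0

/-- The matrix `β_{ℓ,n} = [[0,I_ℓ,0,0],[0,0,0,I_{n−ℓ}],[−I_{n−ℓ},0,0,0],[0,0,I_ℓ,0]]`
of size `2n`. -/
def betaMat (l n : ℕ) (R : Type*) [CommRing R] :
    Matrix (Fin (2*n)) (Fin (2*n)) R :=
  Matrix.of fun i j =>
    if (i : ℕ) < l ∧ (j : ℕ) + l = (i : ℕ) + n then 1
    else if l ≤ (i : ℕ) ∧ (i : ℕ) < n ∧ (j : ℕ) = (i : ℕ) + n then 1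
    else if n ≤ (i : ℕ) ∧ (i : ℕ) < 2*n - l ∧ (j : ℕ) + n = (i : ℕ) then -1
    else if 2*n - l ≤ (i : ℕ) ∧ (j : ℕ) + n = (i : ℕ) + l then 1
    else 0

/-- The embedding of a `2m × 2m` matrix `g` into a `2n × 2n` matrix (for `m ≤ n`),
as the block matrix `diag(I_{n−m}, g, I_{n−m})`. -/
def embedG (m n : ℕ) (hmn : m ≤ n) {R : Type*} [CommRing R]
    (g : Matrix (Fin (2*m)) (Fin (2*m)) R) : Matrix (Fin (2*n)) (Fin (2*n)) R :=
  Matrix.of fun i j =>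
    if h : n - m ≤ (i : ℕ) ∧ (i : ℕ) < n + m ∧ n - m ≤ (j : ℕ) ∧ (j : ℕ) < n + m then
      g ⟨(i : ℕ) - (n - m), by omega⟩ ⟨(j : ℕ) - (n - m), by omega⟩
    else if (i : ℕ) = (j : ℕ) then 1 else 0

/-- The target matrix `M` of STATEMENT 14, a `2n × 2n` block matrix with block column
sizes `(n−ℓ, ℓ−n₂, n₂, n₂, ℓ−n₂, n−ℓ)`: block rows
`(0,I_{ℓ−n₂},0,0,0,0)`, `(0,0,0,0,0,I_{n−ℓ})`, `(0,0,I_{n₂},0,0,0)`,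
`(0,0,0,I_{n₂},0,0)`, `(−I_{n−ℓ},0,0,0,0,0)`, `(0,0,0,0,I_{ℓ−n₂},0)`. -/
def targetMat (n₂ l n : ℕ) (R : Type*) [CommRing R] :
    Matrix (Fin (2*n)) (Fin (2*n)) R :=
  Matrix.of fun i j =>
    if (i : ℕ) < l - n₂ ∧ (j : ℕ) + l = (i : ℕ) + n then 1
    else if l - n₂ ≤ (i : ℕ) ∧ (i : ℕ) < n - n₂ ∧ (j : ℕ) = (i : ℕ) + n + n₂ then 1
    else if n - n₂ ≤ (i : ℕ) ∧ (i : ℕ) < n + n₂ ∧ (j : ℕ) = (i : ℕ) then 1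
    else if n + n₂ ≤ (i : ℕ) ∧ (i : ℕ) < 2*n + n₂ - l ∧ (j : ℕ) + n + n₂ = (i : ℕ) then -1
    else if 2*n + n₂ - l ≤ (i : ℕ) ∧ (j : ℕ) + n = (i : ℕ) + l then 1
    else 0


/-- Row permutation function of `omegaMat a b`. -/
def sigOm (a b i : ℕ) : ℕ :=
  if i < a then i + b else if i < a + b then i - a
  else if i < a + 2*b then i + a else i - b

/-- Column-inverse permutation function of `embedG (a+b) n (omegaMat a b)`. -/
def tauEm (a b n j : ℕ) : ℕ :=
  if j < n - (a+b) ∨ n + (a+b) ≤ j then j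
  else
    (n - (a+b)) +
      (if j - (n - (a+b)) < b then j - (n - (a+b)) + a
       else if j - (n - (a+b)) < a + b then j - (n - (a+b)) - b
       else if j - (n - (a+b)) < 2*a + b then j - (n - (a+b)) + b
       else j - (n - (a+b)) - a)

lemma sigOm_lt (a b : ℕ) (i : ℕ) (h : i < 2*(a+b)) : sigOm a b i < 2*(a+b) := by
  unfold sigOm; split_ifs <;> omega

lemma tauEm_lt (a b n : ℕ) (h : a + b ≤ n) (j : ℕ) (hj : j < 2*n) :
    tauEm a b n j < 2*n := by
  unfold tauEm; split_ifs <;> omega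

lemma omegaMat_eq (a b : ℕ) (R : Type*) [CommRing R] (i k : Fin (2*(a+b))) :
    omegaMat a b R i k = if (k : ℕ) = sigOm a b (i : ℕ) then 1 else 0 := by
  have hi := i.isLt
  have hk := k.isLt
  simp only [omegaMat, of_apply, sigOm]
  split_ifs <;> first | rfl | omega

lemma embed_eq (a b n : ℕ) (h : a + b ≤ n) (R : Type*) [CommRing R]
    (k j : Fin (2*n)) :
    embedG (a+b) n h (omegaMat a b R) k j
      = if (k : ℕ) = tauEm a b n (j : ℕ) then 1 else 0 := by
  have hk := k.isLt
  have hj := j.isLt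
  simp only [embedG, omegaMat, of_apply, tauEm]
  split_ifs <;> first | rfl | omega

lemma mul_ind_left {R : Type*} [CommRing R] {N : ℕ} (σ : ℕ → ℕ)
    (A B : Matrix (Fin N) (Fin N) R)
    (hσ : ∀ i : Fin N, σ i < N)
    (hA : ∀ i k, A i k = if (k : ℕ) = σ (i : ℕ) then 1 else 0) (i j : Fin N) :
    (A * B) i j = B ⟨σ i, hσ i⟩ j := by
  rw [mul_apply, Finset.sum_eq_single (⟨σ i, hσ i⟩ : Fin N)]
  · rw [hA]; simp
  · intro b _ hb
    rw [hA, if_neg, zero_mul]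
    exact fun hh => hb (Fin.ext hh)
  · simp

lemma mul_ind_right {R : Type*} [CommRing R] {N : ℕ} (τ : ℕ → ℕ)
    (B C : Matrix (Fin N) (Fin N) R)
    (hτ : ∀ j : Fin N, τ j < N)
    (hC : ∀ k j, C k j = if (k : ℕ) = τ (j : ℕ) then 1 else 0) (i j : Fin N) :
    (B * C) i j = B i ⟨τ j, hτ j⟩ := by
  rw [mul_apply, Finset.sum_eq_single (⟨τ j, hτ j⟩ : Fin N)]
  · rw [hC]; simp
  · intro b _ hb
    rw [hC, if_neg, mul_zero]
    exact fun hh => hb (Fin.ext hh)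
  · simp


lemma sigOm_cases (a b i : ℕ) (hi : i < 2*(a+b)) :
    (i < a ∧ sigOm a b i = i + b) ∨
    (a ≤ i ∧ i < a + b ∧ sigOm a b i = i - a) ∨
    (a + b ≤ i ∧ i < a + 2*b ∧ sigOm a b i = i + a) ∨
    (a + 2*b ≤ i ∧ sigOm a b i = i - b) := by
  unfold sigOm; split_ifs <;> omega

set_option maxHeartbeats 2000000 in
lemma tauEm_cases (a b n j : ℕ) (h : a + b ≤ n) (hj : j < 2*n) :
    (j < n - (a+b) ∧ tauEm a b n j = j) ∨
    (n - (a+b) ≤ j ∧ j < n - a ∧ tauEm a b n j = j + a) ∨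
    (n - a ≤ j ∧ j < n ∧ tauEm a b n j = j - b) ∨
    (n ≤ j ∧ j < n + a ∧ tauEm a b n j = j + b) ∨
    (n + a ≤ j ∧ j < n + (a+b) ∧ tauEm a b n j = j - a) ∨
    (n + (a+b) ≤ j ∧ tauEm a b n j = j) := by
  unfold tauEm; split_ifs <;> omega




/-- Entry of `betaMat` as a function of raw indices. -/
def lhsVal (R : Type*) [CommRing R] (l n s t : ℕ) : R :=
  if s < l ∧ t + l = s + n then 1
  else if l ≤ s ∧ s < n ∧ t = s + n then 1
  else if n ≤ s ∧ s < 2*n - l ∧ t + n = s then -1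
  else if 2*n - l ≤ s ∧ t + n = s + l then 1
  else 0

/-- Entry of `targetMat` as a function of raw indices. -/
def rhsVal (R : Type*) [CommRing R] (n₂ l n x y : ℕ) : R :=
  if x < l - n₂ ∧ y + l = x + n then 1
  else if l - n₂ ≤ x ∧ x < n - n₂ ∧ y = x + n + n₂ then 1
  else if n - n₂ ≤ x ∧ x < n + n₂ ∧ y = x then 1
  else if n + n₂ ≤ x ∧ x < 2*n + n₂ - l ∧ y + n + n₂ = x then -1
  else if 2*n + n₂ - l ≤ x ∧ y + n = x + l then 1
  else 0

/-- The 6-region characterization of `t = tauEm n₂ (l-n₂) n y`. -/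
def htProp (n₂ l n y t : ℕ) : Prop :=
  (y < n - (n₂ + (l - n₂)) ∧ t = y) ∨
  (n - (n₂ + (l - n₂)) ≤ y ∧ y < n - n₂ ∧ t = y + n₂) ∨
  (n - n₂ ≤ y ∧ y < n ∧ t = y - (l - n₂)) ∨
  (n ≤ y ∧ y < n + n₂ ∧ t = y + (l - n₂)) ∨
  (n + n₂ ≤ y ∧ y < n + (n₂ + (l - n₂)) ∧ t = y - n₂) ∨
  (n + (n₂ + (l - n₂)) ≤ y ∧ t = y)

set_option maxHeartbeats 2000000 in
lemma caseA {R : Type*} [CommRing R] (n₂ l n p q x y t : ℕ)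
    (hn₂ : 0 < n₂) (hp : l = n₂ + p) (hq : n = l + q) (hq0 : 0 < q)
    (hx : x < 2*n) (hy : y < 2*n) (hI : x < p + q) (ht : htProp n₂ l n y t) :
    lhsVal R l n (x + n₂) t = rhsVal R n₂ l n x y := by
  have e1 : l - n₂ = p := by omega
  have e2 : 2*n - l = n + q := by omega
  have e3 : 2*n + n₂ - l = n + n₂ + q := by omega
  have e4 : n - n₂ = p + q := by omega
  have e5 : n - (n₂ + (l - n₂)) = q := by omega
  unfold htProp at ht
  rw [e5, e4, e1] at ht
  unfold lhsVal rhsVal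
  rw [e1, e2, e3, e4]
  clear e1 e2 e3 e4 e5
  rcases ht with ⟨hJ, eJ⟩ | ⟨hJ, hJ', eJ⟩ | ⟨hJ, hJ', eJ⟩ | ⟨hJ, hJ', eJ⟩ | ⟨hJ, hJ', eJ⟩ | ⟨hJ, eJ⟩ <;>
  subst eJ <;>
  · split_ifs <;> first | rfl | omega

set_option maxHeartbeats 2000000 in
lemma caseB {R : Type*} [CommRing R] (n₂ l n p q x y t : ℕ)
    (hn₂ : 0 < n₂) (hp : l = n₂ + p) (hq : n = l + q) (hq0 : 0 < q)
    (hx : x < 2*n) (hy : y < 2*n) (hI : p + q ≤ x) (hI' : x < n) (ht : htProp n₂ l n y t) :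
    lhsVal R l n (x - (p + q)) t = rhsVal R n₂ l n x y := by
  have e1 : l - n₂ = p := by omega
  have e2 : 2*n - l = n + q := by omega
  have e3 : 2*n + n₂ - l = n + n₂ + q := by omega
  have e4 : n - n₂ = p + q := by omega
  have e5 : n - (n₂ + (l - n₂)) = q := by omega
  unfold htProp at ht
  rw [e5, e4, e1] at ht
  unfold lhsVal rhsVal
  rw [e1, e2, e3, e4]
  clear e1 e2 e3 e4 e5
  rcases ht with ⟨hJ, eJ⟩ | ⟨hJ, hJ', eJ⟩ | ⟨hJ, hJ', eJ⟩ | ⟨hJ, hJ', eJ⟩ | ⟨hJ, hJ', eJ⟩ | ⟨hJ, eJ⟩ <;>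
  subst eJ <;>
  · split_ifs <;> first | rfl | omega

set_option maxHeartbeats 2000000 in
lemma caseC {R : Type*} [CommRing R] (n₂ l n p q x y t : ℕ)
    (hn₂ : 0 < n₂) (hp : l = n₂ + p) (hq : n = l + q) (hq0 : 0 < q)
    (hx : x < 2*n) (hy : y < 2*n) (hI : n ≤ x) (hI' : x < n + n₂) (ht : htProp n₂ l n y t) :
    lhsVal R l n (x + (p + q)) t = rhsVal R n₂ l n x y := by
  have e1 : l - n₂ = p := by omega
  have e2 : 2*n - l = n + q := by omega
  have e3 : 2*n + n₂ - l = n + n₂ + q := by omega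
  have e4 : n - n₂ = p + q := by omega
  have e5 : n - (n₂ + (l - n₂)) = q := by omega
  unfold htProp at ht
  rw [e5, e4, e1] at ht
  unfold lhsVal rhsVal
  rw [e1, e2, e3, e4]
  clear e1 e2 e3 e4 e5
  rcases ht with ⟨hJ, eJ⟩ | ⟨hJ, hJ', eJ⟩ | ⟨hJ, hJ', eJ⟩ | ⟨hJ, hJ', eJ⟩ | ⟨hJ, hJ', eJ⟩ | ⟨hJ, eJ⟩ <;>
  subst eJ <;>
  · split_ifs <;> first | rfl | omega

set_option maxHeartbeats 2000000 in
lemma caseD {R : Type*} [CommRing R] (n₂ l n p q x y t : ℕ)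
    (hn₂ : 0 < n₂) (hp : l = n₂ + p) (hq : n = l + q) (hq0 : 0 < q)
    (hx : x < 2*n) (hy : y < 2*n) (hI : n + n₂ ≤ x) (ht : htProp n₂ l n y t) :
    lhsVal R l n (x - n₂) t = rhsVal R n₂ l n x y := by
  have e1 : l - n₂ = p := by omega
  have e2 : 2*n - l = n + q := by omega
  have e3 : 2*n + n₂ - l = n + n₂ + q := by omega
  have e4 : n - n₂ = p + q := by omega
  have e5 : n - (n₂ + (l - n₂)) = q := by omega
  unfold htProp at ht
  rw [e5, e4, e1] at ht
  unfold lhsVal rhsVal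
  rw [e1, e2, e3, e4]
  clear e1 e2 e3 e4 e5
  rcases ht with ⟨hJ, eJ⟩ | ⟨hJ, hJ', eJ⟩ | ⟨hJ, hJ', eJ⟩ | ⟨hJ, hJ', eJ⟩ | ⟨hJ, hJ', eJ⟩ | ⟨hJ, eJ⟩ <;>
  subst eJ <;>
  · split_ifs <;> first | rfl | omega

lemma finalN {R : Type*} [CommRing R] (n₁ n₂ l x y : ℕ)
    (hn₂ : 0 < n₂) (hl : n₂ ≤ l) (hln : l < n₁ + n₂)
    (hx : x < 2*(n₁+n₂)) (hy : y < 2*(n₁+n₂)) :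
    lhsVal R l (n₁+n₂) (sigOm n₁ n₂ x) (tauEm n₂ (l - n₂) (n₁+n₂) y)
      = rhsVal R n₂ l (n₁+n₂) x y := by
  have ht : htProp n₂ l (n₁+n₂) y (tauEm n₂ (l - n₂) (n₁+n₂) y) := by
    unfold htProp
    exact tauEm_cases n₂ (l - n₂) (n₁+n₂) y (by omega) hy
  have hp : l = n₂ + (l - n₂) := by omega
  have hq : n₁ + n₂ = l + (n₁ + n₂ - l) := by omega
  have hq0 : 0 < n₁ + n₂ - l := by omega
  rcases sigOm_cases n₁ n₂ x hx with ⟨hI, eI⟩ | ⟨hI, hI', eI⟩ | ⟨hI, hI', eI⟩ | ⟨hI, eI⟩ <;>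
      rw [eI]
  · exact caseA _ _ _ _ _ _ _ _ hn₂ hp hq hq0 hx hy (by omega) ht
  · have h2 : x - n₁ = x - ((l - n₂) + (n₁ + n₂ - l)) := by omega
    rw [h2]
    exact caseB _ _ _ _ _ _ _ _ hn₂ hp hq hq0 hx hy (by omega) (by omega) ht
  · have h2 : x + n₁ = x + ((l - n₂) + (n₁ + n₂ - l)) := by omega
    rw [h2]
    exact caseC _ _ _ _ _ _ _ _ hn₂ hp hq hq0 hx hy (by omega) (by omega) ht
  · exact caseD _ _ _ _ _ _ _ _ hn₂ hp hq hq0 hx hy (by omega) ht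

set_option maxHeartbeats 1000000 in
/-- for `n₂ ≤ ℓ < n = n₁ + n₂`, the block matrix identity
`ω_{n₁,n₂} β_{ℓ,n} ω_{n₂,ℓ−n₂} = M` holds, where `ω_{n₂,ℓ−n₂}` (of size `2ℓ`) is
embedded into size `2n` via `g ↦ diag(I_{n−ℓ}, g, I_{n−ℓ})`. -/
theorem stmt14 (R : Type*) [CommRing R] (n₁ n₂ l : ℕ)
    (hn₁ : 0 < n₁) (hn₂ : 0 < n₂) (hl : n₂ ≤ l) (hln : l < n₁ + n₂) :
    omegaMat n₁ n₂ R * betaMat l (n₁ + n₂) R *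
        embedG (n₂ + (l - n₂)) (n₁ + n₂) (by omega) (omegaMat n₂ (l - n₂) R) =
      targetMat n₂ l (n₁ + n₂) R := by
  ext i j
  rw [mul_ind_right (tauEm n₂ (l - n₂) (n₁ + n₂)) _ _
      (fun j => tauEm_lt _ _ _ (by omega) _ j.isLt)
      (embed_eq n₂ (l - n₂) (n₁ + n₂) (by omega) R)]
  rw [mul_ind_left (sigOm n₁ n₂) _ _
      (fun i => sigOm_lt _ _ _ i.isLt)
      (omegaMat_eq n₁ n₂ R)]
  exact finalN n₁ n₂ l (i : ℕ) (j : ℕ) hn₂ hl hln i.isLt j.isLt
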